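/- arXiv:1004.3782 — 4 statements merged into one kernel-verified Lean document; each statement's English description precedes it below -/
import Mathlib

section
/- As Δ = 1−α → 0+, one has 2Γ²(1+α)/Γ(1+2α) − 1 = Δ + Δ²(2 − π²/6) + O(Δ³). -/
open Real Filter Asymptotics Set Topology

/-!
With `u x = Γ(1 + 2x) / Γ(1 + x)²`, the functional equation `Γ(s + 1) = s Γ(s)` turns the quantity
into `(1 - Δ) / ((1 - 2Δ) u(-Δ))`, so everything rests on `u x = 1 + (π²/6) x² + O(x³)`.
Since `u` is analytic at `0` with `u 0 = 1` and `u' 0 = 0`, we have `u x = 1 + b x² + O(x³)` for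
some `b`. Instead of computing `b` from `Γ''(1)`, the reflection formula
`Γ(s) Γ(1 - s) = π / sin (π s)` gives `u x · u (-x) = tan (π x) / (π x) = 1 + (π²/3) x² + O(x³)`,
while the expansion of `u` gives `u x · u (-x) = 1 + 2b x² + O(x³)`; hence `b = π²/6`.
-/

lemma Asymptotics.IsBigO.mul_left_of_tendsto {α : Type*} {l : Filter α} {f g h : α → ℝ} {c : ℝ}
    (hh : Tendsto h l (𝓝 c)) (hf : f =O[l] g) : (fun x => h x * f x) =O[l] g :=
  ((hh.isBigO_one ℝ).mul hf).congr_right fun _ => one_mul _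

lemma Asymptotics.IsBigO.comp_neg_pow {f : ℝ → ℝ} {n : ℕ} (hf : f =O[𝓝 0] (· ^ n)) :
    (fun x => f (-x)) =O[𝓝 0] (· ^ n) :=
  (hf.comp_tendsto (by simpa using (continuous_neg (G := ℝ)).tendsto 0)).trans <|
    isBigO_of_le _ fun x => by simp [norm_pow]

lemma eq_zero_of_mul_pow_isBigO_pow_succ {c : ℝ} {n : ℕ}
    (h : (fun x : ℝ => c * x ^ n) =O[𝓝 0] (· ^ (n + 1))) : c = 0 := by
  by_contra hc
  have hlo : (fun x : ℝ => x ^ n) =o[𝓝 0] (· ^ n) :=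
    ((isBigO_const_mul_left_iff hc).mp h).trans_isLittleO (isLittleO_pow_pow n.lt_succ_self)
  refine isLittleO_irrefl' ?_ hlo
  have hne : ∀ᶠ x in 𝓝[≠] (0 : ℝ), x ∈ ({0}ᶜ : Set ℝ) := eventually_mem_nhdsWithin
  exact (hne.frequently.filter_mono nhdsWithin_le_nhds).mono fun x hx =>
    norm_ne_zero_iff.mpr (pow_ne_zero n hx)

lemma AnalyticAt.exists_isBigO_sub_quadratic {f : ℝ → ℝ} (hf : AnalyticAt ℝ f 0) :
    ∃ b, (fun x => f x - (f 0 + deriv f 0 * x + b * x ^ 2)) =O[𝓝 0] (· ^ 3) := by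
  obtain ⟨p, hp⟩ := hf
  refine ⟨p.coeff 2, ?_⟩
  have hc0 : p.coeff 0 = f 0 := hp.coeff_zero 1
  have hsum (x : ℝ) : p.partialSum 3 x = f 0 + deriv f 0 * x + p.coeff 2 * x ^ 2 := by
    simp only [FormalMultilinearSeries.partialSum, Finset.sum_range_succ, Finset.sum_range_zero,
      FormalMultilinearSeries.apply_eq_pow_smul_coeff, smul_eq_mul, hc0, hp.deriv]
    ring
  refine ((hp.isBigO_sub_partialSum_pow 3).trans (isBigO_of_le _ fun x => by simp)).congr_left ?_
  intro x
  rw [zero_add, hsum]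

lemma isBigO_sin_sub_mul_cos : (fun x => sin x - x * cos x - x ^ 3 / 3) =O[𝓝 0] (· ^ 4) := by
  refine IsBigO.of_bound 1 ?_
  filter_upwards [Icc_mem_nhds (show (-1 : ℝ) < 0 by norm_num) one_pos] with x hx
  have hx1 : |x| ≤ 1 := abs_le.mpr hx
  have hsin := sin_bound hx1
  have hcos := cos_bound hx1
  have hsplit : sin x - x * cos x - x ^ 3 / 3
      = (sin x - (x - x ^ 3 / 6)) - x * (cos x - (1 - x ^ 2 / 2)) := by ring
  rw [norm_eq_abs, norm_eq_abs, hsplit, abs_pow]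
  calc |(sin x - (x - x ^ 3 / 6)) - x * (cos x - (1 - x ^ 2 / 2))|
      ≤ |sin x - (x - x ^ 3 / 6)| + |x| * |cos x - (1 - x ^ 2 / 2)| := by
        rw [← abs_mul]; exact abs_sub _ _
    _ ≤ |x| ^ 5 / 100 + |x| * (|x| ^ 4 * (5 / 96)) := by gcongr
    _ ≤ 1 * |x| ^ 4 := by
        have h54 : |x| ^ 5 ≤ |x| ^ 4 := pow_le_pow_of_le_one (abs_nonneg x) hx1 (by norm_num)
        nlinarith [pow_nonneg (abs_nonneg x) 4]

lemma Real.analyticAt_Gamma {x : ℝ} (hx : 0 < x) : AnalyticAt ℝ Gamma x := by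
  have hC : AnalyticAt ℂ Complex.Gamma x := by
    have hne : (Complex.Gamma x)⁻¹ ≠ 0 := by
      simpa [Complex.Gamma_ofReal] using (Gamma_pos_of_pos hx).ne'
    simpa [Pi.inv_def] using (Complex.differentiable_one_div_Gamma.analyticAt (x : ℂ)).inv hne
  simpa [Complex.Gamma_ofReal] using hC.re_ofReal

lemma Real.Gamma_one_add_mul_Gamma_one_sub {s : ℝ} (hs : s ≠ 0) :
    Gamma (1 + s) * Gamma (1 - s) = π * s / sin (π * s) := by
  rw [add_comm, Gamma_add_one hs, mul_assoc, Gamma_mul_Gamma_one_sub]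
  ring

-- At `x = n : ℕ` this is `Nat.centralBinom n`.
noncomputable def gammaCentralBinom (x : ℝ) : ℝ := Gamma (1 + 2 * x) / Gamma (1 + x) ^ 2

lemma gammaCentralBinom_zero : gammaCentralBinom 0 = 1 := by simp [gammaCentralBinom]

lemma analyticAt_gammaCentralBinom : AnalyticAt ℝ gammaCentralBinom 0 := by
  have hΓ : AnalyticAt ℝ Gamma 1 := analyticAt_Gamma one_pos
  refine AnalyticAt.div (hΓ.comp_of_eq (by fun_prop) (by simp))
    ((hΓ.comp_of_eq (by fun_prop) (by simp)).pow 2) (by simp)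

lemma hasDerivAt_gammaCentralBinom_zero : HasDerivAt gammaCentralBinom 0 0 := by
  have hN := hasDerivAt_Gamma_one.comp_of_eq (0 : ℝ)
    (((hasDerivAt_id (0 : ℝ)).const_mul 2).const_add 1) (by simp)
  have hD := hasDerivAt_Gamma_one.comp_of_eq (0 : ℝ) ((hasDerivAt_id (0 : ℝ)).const_add 1) (by simp)
  exact (hN.div (hD.pow 2) (by simp)).congr_deriv (by simp; ring)

lemma gammaCentralBinom_mul_neg {x : ℝ} (hcos : cos (π * x) ≠ 0) :
    gammaCentralBinom x * gammaCentralBinom (-x) * (π * x * cos (π * x)) = sin (π * x) := by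
  rcases eq_or_ne x 0 with rfl | hx
  · simp
  have hprod : gammaCentralBinom x * gammaCentralBinom (-x)
      = Gamma (1 + 2 * x) * Gamma (1 - 2 * x) / (Gamma (1 + x) * Gamma (1 - x)) ^ 2 := by
    simp only [gammaCentralBinom, mul_neg, ← sub_eq_add_neg]
    ring
  rw [hprod, Gamma_one_add_mul_Gamma_one_sub hx,
    Gamma_one_add_mul_Gamma_one_sub (mul_ne_zero two_ne_zero hx),
    show π * (2 * x) = 2 * (π * x) by ring, sin_two_mul]
  rcases eq_or_ne (sin (π * x)) 0 with hsin | hsin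
  · simp [hsin]
  · field_simp

lemma isBigO_mul_comp_neg_sub {f : ℝ → ℝ} {b : ℝ}
    (hf : (fun x => f x - (1 + b * x ^ 2)) =O[𝓝 0] (· ^ 3)) :
    (fun x => f x * f (-x) - (1 + 2 * b * x ^ 2)) =O[𝓝 0] (· ^ 3) := by
  have hf' := hf.comp_neg_pow
  have hf'₀ : Tendsto (fun x => f (-x) - (1 + b * (-x) ^ 2)) (𝓝 0) (𝓝 0) :=
    hf'.trans_tendsto (by simpa using (continuous_pow 3).tendsto (0 : ℝ))
  have hquartic : (fun x : ℝ => b ^ 2 * x * x ^ 3) =O[𝓝 0] (· ^ 3) :=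
    (isBigO_refl _ _).mul_left_of_tendsto (by simpa using (continuous_const_mul (b ^ 2)).tendsto 0)
  have hcross := (hf.add hf').mul_left_of_tendsto
    (show Tendsto (fun x : ℝ => 1 + b * x ^ 2) (𝓝 0) (𝓝 1) by
      simpa using ((continuous_pow 2).const_mul b |>.const_add 1).tendsto (0 : ℝ))
  refine (hquartic.add (hcross.add (hf.mul_left_of_tendsto hf'₀))).congr_left fun x => ?_
  ring

lemma eq_pi_sq_div_six_of_reflection {f : ℝ → ℝ} {b : ℝ}
    (hf : (fun x => f x - (1 + b * x ^ 2)) =O[𝓝 0] (· ^ 3))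
    (hrefl : ∀ᶠ x in 𝓝 0, f x * f (-x) * (π * x * cos (π * x)) = sin (π * x)) :
    b = π ^ 2 / 6 := by
  have hπx : Tendsto (fun x : ℝ => π * x) (𝓝 0) (𝓝 0) := by
    simpa using (continuous_const_mul π).tendsto (0 : ℝ)
  have hcos : (fun x => cos (π * x) - 1) =O[𝓝 0] (fun x => x) := by
    simpa using ((hasDerivAt_id (0 : ℝ)).const_mul π).cos.hasFDerivAt.isBigO_sub
  have hK : (fun x => π * cos (π * x) * x) =O[𝓝 0] (fun x => x) :=
    (isBigO_refl _ _).mul_left_of_tendsto (((continuous_cos.tendsto _).comp hπx).const_mul π)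
  have hS : (fun x => sin (π * x) - π * x * cos (π * x) - (π * x) ^ 3 / 3) =O[𝓝 0] (· ^ 4) :=
    (isBigO_sin_sub_mul_cos.comp_tendsto hπx).trans <|
      ((isBigO_refl (· ^ 4) _).const_mul_left (π ^ 4)).congr_left fun x => by
        simp only [Function.comp_apply]; ring
  -- the `x³` coefficients of `sin (π x)` and of `f x * f (-x) * (π x cos (π x))` must agree
  have hcubic : (fun x => (π ^ 3 / 3 - 2 * b * π) * x ^ 3) =O[𝓝 0] (· ^ (3 + 1)) := by
    refine (((isBigO_mul_comp_neg_sub hf).mul hK).add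
      (((isBigO_refl (· ^ 3) _).const_mul_left (2 * b * π)).mul hcos) |>.sub hS).congr'
      ?_ (Eventually.of_forall fun x => by ring)
    filter_upwards [hrefl] with x hx
    linear_combination hx
  have hcoeff : π * (π ^ 2 - 6 * b) = 0 := by
    linear_combination 3 * eq_zero_of_mul_pow_isBigO_pow_succ hcubic
  linarith [(mul_eq_zero.mp hcoeff).resolve_left pi_ne_zero]

lemma isBigO_gammaCentralBinom_sub :
    (fun x => gammaCentralBinom x - (1 + π ^ 2 / 6 * x ^ 2)) =O[𝓝 0] (· ^ 3) := by
  obtain ⟨b, hb⟩ := analyticAt_gammaCentralBinom.exists_isBigO_sub_quadratic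
  simp only [gammaCentralBinom_zero, hasDerivAt_gammaCentralBinom_zero.deriv, zero_mul,
    add_zero] at hb
  have hcos : ∀ᶠ x in 𝓝 0, cos (π * x) ≠ 0 :=
    (continuous_cos.comp (continuous_const_mul π)).continuousAt.eventually_ne (by simp)
  rwa [← eq_pi_sq_div_six_of_reflection hb (hcos.mono fun _ => gammaCentralBinom_mul_neg)]

lemma isBigO_one_sub_div_sub {v : ℝ → ℝ} {c : ℝ}
    (hv : (fun x => v x - (1 + c * x ^ 2)) =O[𝓝 0] (· ^ 3)) :
    (fun x => (1 - x) / ((1 - 2 * x) * v x) - (1 + x + (2 - c) * x ^ 2)) =O[𝓝 0] (· ^ 3) := by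
  have hcont (p : ℝ → ℝ) (hp : Continuous p) : Tendsto p (𝓝 0) (𝓝 (p 0)) := hp.tendsto 0
  have hv₁ : Tendsto v (𝓝 0) (𝓝 1) := by
    have h := (hv.trans_tendsto (by simpa using hcont _ (continuous_pow 3))).add
      (hcont (fun x => 1 + c * x ^ 2) (by fun_prop))
    simpa using h
  have hden : Tendsto (fun x => (1 - 2 * x) * v x) (𝓝 0) (𝓝 1) := by
    simpa using (hcont (fun x => 1 - 2 * x) (by fun_prop)).mul hv₁
  have hnum : (fun x => (1 - x) - (1 + x + (2 - c) * x ^ 2) * ((1 - 2 * x) * v x))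
      =O[𝓝 0] (· ^ 3) := by
    refine (((isBigO_refl (· ^ 3) _).mul_left_of_tendsto
      (hcont (fun x => (4 - c) + c ^ 2 * x + 2 * (2 - c) * c * x ^ 2) (by fun_prop))).add
      (hv.mul_left_of_tendsto
        (hcont (fun x => -((1 + x + (2 - c) * x ^ 2) * (1 - 2 * x))) (by fun_prop)))).congr_left
      fun x => ?_
    ring
  refine (hnum.mul_left_of_tendsto (hden.inv₀ one_ne_zero)).congr' ?_ EventuallyEq.rfl
  filter_upwards [hden.eventually_ne one_ne_zero] with x hx
  generalize (1 - 2 * x) * v x = d at hx ⊢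
  field_simp

lemma two_mul_Gamma_sq_div_Gamma_eq {x : ℝ} (hx : x < 1 / 2) :
    2 * Gamma (1 + (1 - x)) ^ 2 / Gamma (1 + 2 * (1 - x))
      = (1 - x) / ((1 - 2 * x) * gammaCentralBinom (-x)) := by
  have h₁ : Gamma (1 + (1 - x)) = (1 - x) * Gamma (1 - x) := by
    rw [add_comm, Gamma_add_one (by linarith)]
  have h₂ : Gamma (1 + 2 * (1 - x)) = (2 - 2 * x) * ((1 - 2 * x) * Gamma (1 - 2 * x)) := by
    rw [show 1 + 2 * (1 - x) = (1 - 2 * x) + 1 + 1 by ring, Gamma_add_one (by linarith),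
      Gamma_add_one (by linarith)]
    ring
  have hΓ₁ := (Gamma_pos_of_pos (show 0 < 1 - x by linarith)).ne'
  have hΓ₂ := (Gamma_pos_of_pos (show 0 < 1 - 2 * x by linarith)).ne'
  rw [h₁, h₂, gammaCentralBinom, mul_neg, ← sub_eq_add_neg, ← sub_eq_add_neg]
  field_simp

/-- As Δ = 1−α → 0+, 2Γ²(1+α)/Γ(1+2α) − 1 = Δ + Δ²(2 − π²/6) + O(Δ³), where α = 1−Δ. -/
theorem stmt0 :
    (fun Δ : ℝ =>
        2 * (Real.Gamma (1 + (1 - Δ)))^2 / Real.Gamma (1 + 2 * (1 - Δ)) - 1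
          - (Δ + Δ^2 * (2 - π^2 / 6)))
      =O[nhdsWithin 0 (Ioi 0)] (fun Δ : ℝ => Δ^3) := by
  have hv : (fun x => gammaCentralBinom (-x) - (1 + π ^ 2 / 6 * x ^ 2)) =O[𝓝 0] (· ^ 3) :=
    isBigO_gammaCentralBinom_sub.comp_neg_pow.congr_left fun x => by ring
  refine ((isBigO_one_sub_div_sub hv).congr' ?_ EventuallyEq.rfl).mono nhdsWithin_le_nhds
  filter_upwards [eventually_lt_nhds (show (0 : ℝ) < 1 / 2 by norm_num)] with x hx
  rw [two_mul_Gamma_sq_div_Gamma_eq hx]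
  ring
end

section
/- Let 0 < Δ < 1/2, α = 1−Δ, and g(θ;Δ) = [sin(αθ)]^{α/Δ} sin(Δθ) / [sin θ]^{1/Δ}. Then g(·;Δ) is monotonically increasing and convex on (0, π). -/
open Real Set

/-!
With `α = 1 - Δ` and `1 / Δ = α / Δ + 1`, `log g = (α / Δ) φ_α + φ_Δ` where
`φ_c θ = log sin (c θ) - log sin θ`. For `0 < c ≤ 1` on `(0, π)`, `φ_c' = c cot (c θ) - cot θ ≥ 0`
and `φ_c'' = 1 / sin² θ - c² / sin² (c θ) ≥ 0`, the latter because `c sin θ ≤ sin (c θ)` by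
concavity of `sin`. Hence `log g` is monotone and convex, and so is `g = exp ∘ log g`.
-/

section SinMul

variable {c θ : ℝ}

lemma hasDerivAt_sin_const_mul (c θ : ℝ) :
    HasDerivAt (fun x => sin (c * x)) (c * cos (c * θ)) θ := by
  simpa [mul_comm] using ((hasDerivAt_id θ).const_mul c).sin

lemma hasDerivAt_cot_const_mul (hθ : sin (c * θ) ≠ 0) :
    HasDerivAt (fun x => cos (c * x) / sin (c * x)) (-(c / sin (c * θ) ^ 2)) θ := by
  have hcos : HasDerivAt (fun x => cos (c * x)) (-(c * sin (c * θ))) θ := by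
    simpa [mul_comm] using ((hasDerivAt_id θ).const_mul c).cos
  refine (hcos.div (hasDerivAt_sin_const_mul c θ) hθ).congr_deriv ?_
  field_simp
  linear_combination (-c) * sin_sq_add_cos_sq (c * θ)

lemma mul_sin_le_sin_mul (hc0 : 0 ≤ c) (hc1 : c ≤ 1) (hθ0 : 0 ≤ θ) (hθπ : θ ≤ π) :
    c * sin θ ≤ sin (c * θ) := by
  simpa using strictConcaveOn_sin_Icc.concaveOn.2 (left_mem_Icc.2 pi_pos.le) ⟨hθ0, hθπ⟩
    (sub_nonneg.2 hc1) hc0 (sub_add_cancel 1 c)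

lemma sin_mul_pos (hc0 : 0 < c) (hc1 : c ≤ 1) (hθ : θ ∈ Ioo 0 π) : 0 < sin (c * θ) :=
  sin_pos_of_pos_of_lt_pi (mul_pos hc0 hθ.1)
    (lt_of_le_of_lt (mul_le_of_le_one_left hθ.1.le hc1) hθ.2)

-- This is `cot θ ≤ c cot (c θ)`; the difference of the two sides vanishes at `0` and has
-- derivative `(1 - c²) sin (c θ) sin θ ≥ 0`.
lemma cos_mul_sin_const_mul_le (hc0 : 0 ≤ c) (hc1 : c ≤ 1) (hθ : θ ∈ Icc 0 π) :
    cos θ * sin (c * θ) ≤ c * cos (c * θ) * sin θ := by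
  set F : ℝ → ℝ := fun x => c * cos (c * x) * sin x - cos x * sin (c * x)
  have hF : ∀ x, HasDerivAt F ((1 - c ^ 2) * (sin (c * x) * sin x)) x := by
    intro x
    have hcos : HasDerivAt (fun x => cos (c * x)) (-(c * sin (c * x))) x := by
      simpa [mul_comm] using ((hasDerivAt_id x).const_mul c).cos
    refine (((hcos.const_mul c).mul (hasDerivAt_sin x)).sub
      ((hasDerivAt_cos x).mul (hasDerivAt_sin_const_mul c x))).congr_deriv ?_
    ring
  have hmono : MonotoneOn F (Icc 0 π) := by
    refine monotoneOn_of_hasDerivWithinAt_nonneg (convex_Icc 0 π)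
      (fun x _ => (hF x).continuousAt.continuousWithinAt)
      (fun x _ => (hF x).hasDerivWithinAt) fun x hx => ?_
    rw [interior_Icc] at hx
    have hc2 : 0 ≤ 1 - c ^ 2 := by nlinarith
    exact mul_nonneg hc2 (mul_nonneg
      (sin_nonneg_of_nonneg_of_le_pi (mul_nonneg hc0 hx.1.le)
        ((mul_le_of_le_one_left hx.1.le hc1).trans hx.2.le))
      (sin_nonneg_of_nonneg_of_le_pi hx.1.le hx.2.le))
  have := hmono (left_mem_Icc.2 pi_pos.le) hθ hθ.1
  simp only [F, mul_zero, sin_zero, cos_zero] at this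
  linarith

end SinMul

noncomputable def logSinRatio (c θ : ℝ) : ℝ := log (sin (c * θ)) - log (sin θ)

section LogSinRatio

variable {c θ : ℝ}

lemma hasDerivAt_logSinRatio (hcθ : sin (c * θ) ≠ 0) (hθ : sin θ ≠ 0) :
    HasDerivAt (logSinRatio c) (c * (cos (c * θ) / sin (c * θ)) - cos θ / sin θ) θ := by
  refine (((hasDerivAt_sin_const_mul c θ).log hcθ).sub ((hasDerivAt_sin θ).log hθ)).congr_deriv ?_
  ring

lemma hasDerivAt_deriv_logSinRatio (hcθ : sin (c * θ) ≠ 0) (hθ : sin θ ≠ 0) :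
    HasDerivAt (fun x => c * (cos (c * x) / sin (c * x)) - cos x / sin x)
      (1 / sin θ ^ 2 - c ^ 2 / sin (c * θ) ^ 2) θ := by
  have hcot : HasDerivAt (fun x => cos x / sin x) (-(1 / sin θ ^ 2)) θ := by
    simpa using hasDerivAt_cot_const_mul (c := 1) (by simpa using hθ)
  refine (((hasDerivAt_cot_const_mul hcθ).const_mul c).sub hcot).congr_deriv ?_
  ring

lemma logSinRatio_monotoneOn (hc0 : 0 < c) (hc1 : c ≤ 1) :
    MonotoneOn (logSinRatio c) (Ioo 0 π) := by
  have hpos : ∀ x ∈ Ioo 0 π, 0 < sin (c * x) ∧ 0 < sin x := fun x hx =>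
    ⟨sin_mul_pos hc0 hc1 hx, sin_pos_of_pos_of_lt_pi hx.1 hx.2⟩
  have hd := fun x hx => hasDerivAt_logSinRatio (hpos x hx).1.ne' (hpos x hx).2.ne'
  refine monotoneOn_of_hasDerivWithinAt_nonneg (convex_Ioo 0 π)
    (fun x hx => (hd x hx).continuousAt.continuousWithinAt)
    (fun x hx => (hd x (interior_subset hx)).hasDerivWithinAt) fun x hx => ?_
  rw [interior_Ioo] at hx
  obtain ⟨hcx, hx'⟩ := hpos x hx
  rw [sub_nonneg, ← mul_div_assoc, div_le_div_iff₀ hx' hcx]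
  exact cos_mul_sin_const_mul_le hc0.le hc1 (Ioo_subset_Icc_self hx)

lemma logSinRatio_convexOn (hc0 : 0 < c) (hc1 : c ≤ 1) :
    ConvexOn ℝ (Ioo 0 π) (logSinRatio c) := by
  have hpos : ∀ x ∈ Ioo 0 π, 0 < sin (c * x) ∧ 0 < sin x := fun x hx =>
    ⟨sin_mul_pos hc0 hc1 hx, sin_pos_of_pos_of_lt_pi hx.1 hx.2⟩
  have hd := fun x hx => hasDerivAt_logSinRatio (hpos x hx).1.ne' (hpos x hx).2.ne'
  have hd2 := fun x hx => hasDerivAt_deriv_logSinRatio (hpos x hx).1.ne' (hpos x hx).2.ne'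
  have hcont : ContinuousOn (logSinRatio c) (Ioo 0 π) := fun x hx =>
    (hd x hx).continuousAt.continuousWithinAt
  rw [← interior_Ioo] at hd hd2
  refine convexOn_of_hasDerivWithinAt2_nonneg (convex_Ioo 0 π) hcont
    (fun x hx => (hd x hx).hasDerivWithinAt) (fun x hx => (hd2 x hx).hasDerivWithinAt) ?_
  rw [interior_Ioo]
  intro x hx
  obtain ⟨hcx, hx'⟩ := hpos x hx
  have hsin := mul_sin_le_sin_mul hc0.le hc1 hx.1.le hx.2.le
  rw [sub_nonneg, div_le_div_iff₀ (by positivity) (by positivity)]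
  nlinarith [mul_pos hc0 hx']

end LogSinRatio

lemma ConvexOn.exp_comp {E : Type*} [AddCommMonoid E] [Module ℝ E] {s : Set E} {f : E → ℝ}
    (hf : ConvexOn ℝ s f) : ConvexOn ℝ s (fun x => exp (f x)) :=
  ⟨hf.1, fun _ hx _ hy _ _ ha hb hab =>
    (exp_le_exp.2 (hf.2 hx hy ha hb hab)).trans (convexOn_exp.2 trivial trivial ha hb hab)⟩

lemma eqOn_exp_logSinRatio {Δ : ℝ} (h0 : 0 < Δ) (h1 : Δ < 1) :
    EqOn (fun θ => sin ((1 - Δ) * θ) ^ ((1 - Δ) / Δ) * sin (Δ * θ) / sin θ ^ (1 / Δ))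
      (fun θ => exp ((1 - Δ) / Δ * logSinRatio (1 - Δ) θ + logSinRatio Δ θ)) (Ioo 0 π) := by
  intro θ hθ
  have hs := sin_pos_of_pos_of_lt_pi hθ.1 hθ.2
  have hsα := sin_mul_pos (sub_pos.2 h1) (sub_le_self 1 h0.le) hθ
  have hsΔ := sin_mul_pos h0 h1.le hθ
  simp only [logSinRatio]
  conv_lhs => rw [rpow_def_of_pos hsα, rpow_def_of_pos hs, ← exp_log hsΔ, ← exp_add, ← exp_sub]
  congr 1
  field_simp
  ring

/-- For 0 < Δ < 1/2 and α = 1−Δ, the function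
g(θ;Δ) = [sin(αθ)]^{α/Δ}·sin(Δθ)/[sin θ]^{1/Δ} is monotonically
increasing and convex on (0, π). -/
theorem stmt6 (Δ : ℝ) (h0 : 0 < Δ) (h1 : Δ < 1/2) :
    MonotoneOn (fun θ : ℝ =>
        (Real.sin ((1 - Δ) * θ)) ^ ((1 - Δ) / Δ) * Real.sin (Δ * θ)
          / (Real.sin θ) ^ (1 / Δ)) (Ioo 0 π) ∧
    ConvexOn ℝ (Ioo 0 π) (fun θ : ℝ =>
        (Real.sin ((1 - Δ) * θ)) ^ ((1 - Δ) / Δ) * Real.sin (Δ * θ)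
          / (Real.sin θ) ^ (1 / Δ)) := by
  have hΔ1 : Δ < 1 := by linarith
  have hα0 : 0 < 1 - Δ := by linarith
  have hα1 : 1 - Δ ≤ 1 := by linarith
  have hcoef : 0 ≤ (1 - Δ) / Δ := by positivity
  have hmono : MonotoneOn (fun θ => (1 - Δ) / Δ * logSinRatio (1 - Δ) θ + logSinRatio Δ θ)
      (Ioo 0 π) :=
    ((monotone_mul_left_of_nonneg hcoef).comp_monotoneOn
      (logSinRatio_monotoneOn hα0 hα1)).add (logSinRatio_monotoneOn h0 hΔ1.le)
  have hconv : ConvexOn ℝ (Ioo 0 π)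
      (fun θ => (1 - Δ) / Δ * logSinRatio (1 - Δ) θ + logSinRatio Δ θ) :=
    ((logSinRatio_convexOn hα0 hα1).smul hcoef).add (logSinRatio_convexOn h0 hΔ1.le)
  have heq := eqOn_exp_logSinRatio h0 hΔ1
  exact ⟨(exp_monotone.comp_monotoneOn hmono).congr heq.symm, hconv.exp_comp.congr heq.symm⟩
end

section
/- For 0 < Δ < 1, α = 1−Δ, and real t with |t| < Δ/e, the series ∑_{n=0}^∞ (tⁿ/n!) Γ(1 + n/Δ)/Γ(1 + nα/Δ) converges absolutely. -/
open Real

lemma gamma_add_nat_le (x : ℝ) (hx : 0 < x) :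
    ∀ (n : ℕ) (M : ℝ), 0 ≤ M → x + n ≤ M + 1 →
      Real.Gamma (x + n) ≤ Real.Gamma x * M ^ n := by
  intro n
  induction n with
  | zero => intro M _ _; simp
  | succ n ih =>
    intro M hM h
    have hxn : (0:ℝ) < x + n := by positivity
    have hxnM : x + n ≤ M := by
      push_cast at h ⊢; linarith
    have key : Real.Gamma (x + (n + 1 : ℕ)) = (x + n) * Real.Gamma (x + n) := by
      have : x + ((n : ℝ) + 1) = (x + n) + 1 := by ring
      push_cast
      rw [this, Real.Gamma_add_one hxn.ne']
    calc Real.Gamma (x + (n + 1 : ℕ)) = (x + n) * Real.Gamma (x + n) := key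
      _ ≤ M * (Real.Gamma x * M ^ n) := by
          apply mul_le_mul hxnM (ih M hM (by linarith)) (Real.Gamma_nonneg_of_nonneg hxn.le)
            hM
      _ = Real.Gamma x * M ^ (n + 1) := by ring

lemma pow_div_factorial_le_exp (x : ℝ) (hx : 0 ≤ x) (n : ℕ) :
    x ^ n / (Nat.factorial n : ℝ) ≤ Real.exp x := by
  calc x ^ n / (Nat.factorial n : ℝ)
      ≤ ∑ i ∈ Finset.range (n + 1), x ^ i / (Nat.factorial i : ℝ) := by
        apply Finset.single_le_sum (f := fun i => x ^ i / (Nat.factorial i : ℝ))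
        · intro i _; positivity
        · exact Finset.self_mem_range_succ n
    _ ≤ Real.exp x := Real.sum_le_exp_of_nonneg hx _

/-- For 0 < Δ < 1, α = 1−Δ, and real t with |t| < Δ/e, the series
∑_{n=0}^∞ (tⁿ/n!)·Γ(1 + n/Δ)/Γ(1 + nα/Δ) converges absolutely. -/
theorem stmt9 (Δ : ℝ) (h0 : 0 < Δ) (h1 : Δ < 1) (t : ℝ)
    (ht : |t| < Δ / Real.exp 1) :
    Summable (fun n : ℕ =>
      |t ^ n / (Nat.factorial n : ℝ) * (Real.Gamma (1 + n / Δ) / Real.Gamma (1 + n * (1 - Δ) / Δ))|) := by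
  set r : ℝ := |t| * Real.exp 1 / Δ with hr
  have hrlt : r < 1 := by
    rw [hr, div_lt_one h0]
    calc |t| * Real.exp 1 < (Δ / Real.exp 1) * Real.exp 1 := by
          apply mul_lt_mul_of_pos_right ht (Real.exp_pos 1)
      _ = Δ := by field_simp
  have hr0 : 0 ≤ r := by positivity
  apply Summable.of_nonneg_of_le (fun n => abs_nonneg _) _
    (summable_geometric_of_lt_one hr0 hrlt)
  intro n
  have hx : (0:ℝ) < 1 + n * (1 - Δ) / Δ := by
    have : (0:ℝ) ≤ (n:ℝ) * (1 - Δ) / Δ :=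
      div_nonneg (mul_nonneg (Nat.cast_nonneg n) (by linarith)) h0.le
    linarith
  have hG2 : 0 < Real.Gamma (1 + n * (1 - Δ) / Δ) := Real.Gamma_pos_of_pos hx
  have hshift : (1 + n * (1 - Δ) / Δ) + (n : ℝ) = 1 + n / Δ := by
    field_simp; ring
  have hbound : Real.Gamma (1 + n / Δ) ≤ Real.Gamma (1 + n * (1 - Δ) / Δ) * (n / Δ) ^ n := by
    rw [← hshift]
    apply gamma_add_nat_le _ hx n (n / Δ) (by positivity)
    rw [hshift]
    have : (n : ℝ) / Δ + 1 = 1 + n / Δ := by ring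
    rw [this]
  have hG1 : 0 ≤ Real.Gamma (1 + n / Δ) := by
    apply Real.Gamma_nonneg_of_nonneg; positivity
  have hfac : (0:ℝ) < (Nat.factorial n : ℝ) := by positivity
  rw [abs_mul, abs_div, abs_pow, Nat.abs_cast, abs_div, abs_of_nonneg hG1,
    abs_of_nonneg hG2.le]
  have step1 : |t| ^ n / (Nat.factorial n : ℝ) *
      (Real.Gamma (1 + n / Δ) / Real.Gamma (1 + n * (1 - Δ) / Δ))
      ≤ |t| ^ n / (Nat.factorial n : ℝ) * (n / Δ) ^ n := by
    apply mul_le_mul_of_nonneg_left _ (by positivity)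
    rw [div_le_iff₀ hG2]
    linarith [hbound]
  refine step1.trans ?_
  have hnn : |t| ^ n / (Nat.factorial n : ℝ) * (n / Δ) ^ n
      = (|t| / Δ) ^ n * ((n : ℝ) ^ n / (Nat.factorial n : ℝ)) := by
    rw [div_pow, div_pow]
    ring
  rw [hnn]
  calc (|t| / Δ) ^ n * ((n : ℝ) ^ n / (Nat.factorial n : ℝ))
      ≤ (|t| / Δ) ^ n * Real.exp n := by
        apply mul_le_mul_of_nonneg_left
          (_root_.pow_div_factorial_le_exp (n : ℝ) (Nat.cast_nonneg n) n) (by positivity)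
    _ = r ^ n := by
        rw [hr, div_pow, div_pow, mul_pow, Real.exp_one_pow]
        ring
end

section
/- If X ∼ S(α, β=1, F cos(πα/2)) with 0 < α < 1, E(X^λ) = F^{λ/α} Γ(1−λ/α)/Γ(1−λ) for λ < α, and Ĵ = Δ X^{−α/Δ} with Δ = 1−α, then the third central moment satisfies E(Ĵ − F^{−1/Δ})³ = F^{−3/Δ}(17 − 21Δ + 6Δ²). -/
open Real MeasureTheory Finset

/-!
With Δ = 1 - α, the moment formula at λ = -nα/Δ has 1 - λ/α = n/Δ + 1 and 1 - λ = n/Δ + 1 - n,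
so the Gamma ratio telescopes to ∏_{j<n} (n/Δ - j) and E Ĵⁿ = F^{-n/Δ} ∏_{j<n} (n - jΔ).
Expanding the cube binomially, with c = F^{-1/Δ},
E (Ĵ - c)³ = c³ (3(3 - Δ)(3 - 2Δ) - 3·2(2 - Δ) + 3 - 1) = c³ (17 - 21Δ + 6Δ²).
-/

theorem Real.Gamma_div_Gamma_sub_nat (t : ℝ) (n : ℕ) (hn : (n : ℝ) < t + 1) :
    Gamma (t + 1) / Gamma (t + 1 - n) = ∏ j ∈ range n, (t - j) := by
  induction n with
  | zero => simp [(Gamma_pos_of_pos (by linarith : (0 : ℝ) < t + 1)).ne']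
  | succ n ih =>
    push_cast at hn
    have hpos : 0 < t - n := by linarith
    rw [prod_range_succ, ← ih (by linarith), show t + 1 - n = (t - n) + 1 by ring,
      Gamma_add_one hpos.ne', show t + 1 - ((n + 1 : ℕ) : ℝ) = t - n by push_cast; ring]
    field_simp [(Gamma_pos_of_pos hpos).ne']

theorem MeasureTheory.integral_sub_const_pow {Ω : Type*} [MeasurableSpace Ω] {μ : Measure Ω}
    {Z : Ω → ℝ} {n : ℕ} (hZ : ∀ k ≤ n, Integrable (fun ω ↦ Z ω ^ k) μ) (c : ℝ) :
    ∫ ω, (Z ω - c) ^ n ∂μ = ∑ k ∈ range (n + 1), (-c) ^ (n - k) * n.choose k * ∫ ω, Z ω ^ k ∂μ := by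
  simp_rw [sub_eq_add_neg, add_pow]
  rw [integral_finsetSum]
  · refine sum_congr rfl fun k _ ↦ ?_
    rw [← integral_const_mul]
    congr 1 with ω
    ring
  · intro k hk
    exact ((hZ k (Nat.lt_succ_iff.mp (mem_range.mp hk))).mul_const _).mul_const _

section StableMoments

variable {Ω : Type*} [MeasurableSpace Ω] {μ : Measure Ω} {X : Ω → ℝ} {α F : ℝ}

theorem integral_rpow_neg_nat_mul (hα0 : 0 < α) (hα1 : α < 1)
    (hmom : ∀ l : ℝ, l < α →
      ∫ ω, X ω ^ l ∂μ = F ^ (l / α) * (Real.Gamma (1 - l / α) / Real.Gamma (1 - l)))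
    (n : ℕ) :
    ∫ ω, X ω ^ (-(n * (α / (1 - α)))) ∂μ
      = F ^ (-(n / (1 - α))) * ∏ j ∈ range n, (n / (1 - α) - j) := by
  have hΔ : 0 < 1 - α := by linarith
  have hn : (n : ℝ) ≤ n / (1 - α) := le_div_self n.cast_nonneg hΔ (by linarith)
  have hl : -(n * (α / (1 - α))) < α := by
    have : 0 ≤ n * (α / (1 - α)) := by positivity
    linarith
  rw [hmom _ hl, ← Gamma_div_Gamma_sub_nat _ n (by linarith)]
  congr 3
  · field_simp
  · field_simp; ring
  · field_simp; ring

theorem integral_mul_rpow_neg_pow (hX : ∀ᵐ ω ∂μ, 0 < X ω) (hα0 : 0 < α) (hα1 : α < 1)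
    (hF : 0 < F)
    (hmom : ∀ l : ℝ, l < α →
      ∫ ω, X ω ^ l ∂μ = F ^ (l / α) * (Real.Gamma (1 - l / α) / Real.Gamma (1 - l)))
    (n : ℕ) :
    ∫ ω, ((1 - α) * X ω ^ (-(α / (1 - α)))) ^ n ∂μ
      = (F ^ (-(1 / (1 - α)))) ^ n * ∏ j ∈ range n, (n - j * (1 - α)) := by
  have hΔ : 0 < 1 - α := by linarith
  have hae : (fun ω ↦ ((1 - α) * X ω ^ (-(α / (1 - α)))) ^ n)
      =ᵐ[μ] fun ω ↦ (1 - α) ^ n * X ω ^ (-(n * (α / (1 - α)))) := by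
    filter_upwards [hX] with ω hω
    rw [mul_pow, ← rpow_natCast (X ω ^ _), ← rpow_mul hω.le, neg_mul, mul_comm (α / _), mul_comm]
  have hprod : ∏ j ∈ range n, ((n : ℝ) - j * (1 - α))
      = (1 - α) ^ n * ∏ j ∈ range n, (n / (1 - α) - j) := by
    rw [show (1 - α) ^ n = ∏ _j ∈ range n, (1 - α) by simp, ← prod_mul_distrib]
    exact prod_congr rfl fun j _ ↦ by field_simp
  rw [integral_congr_ae hae, integral_const_mul, integral_rpow_neg_nat_mul hα0 hα1 hmom,
    hprod, ← rpow_natCast (F ^ _), ← rpow_mul hF.le]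
  ring_nf

theorem integrable_mul_rpow_neg_pow (hX : ∀ᵐ ω ∂μ, 0 < X ω) (hα0 : 0 < α) (hα1 : α < 1)
    (hF : 0 < F)
    (hmom : ∀ l : ℝ, l < α →
      ∫ ω, X ω ^ l ∂μ = F ^ (l / α) * (Real.Gamma (1 - l / α) / Real.Gamma (1 - l)))
    (n : ℕ) :
    Integrable (fun ω ↦ ((1 - α) * X ω ^ (-(α / (1 - α)))) ^ n) μ := by
  -- a non-integrable function would have Bochner integral 0, but the moment is positive
  refine .of_integral_ne_zero ?_
  rw [integral_mul_rpow_neg_pow hX hα0 hα1 hF hmom]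
  refine (mul_pos (by positivity) (prod_pos fun j hj ↦ ?_)).ne'
  have hj : (j : ℝ) < n := by exact_mod_cast mem_range.mp hj
  have : (j : ℝ) * (1 - α) ≤ j := mul_le_of_le_one_right j.cast_nonneg (by linarith)
  linarith

end StableMoments

/-- Under the moment formula for X ∼ S(α, β=1, F cos(πα/2)), the third central
moment of Ĵ = ΔX^{−α/Δ} (Δ = 1−α) satisfies
E(Ĵ − F^{−1/Δ})³ = F^{−3/Δ}(17 − 21Δ + 6Δ²). -/
theorem stmt17 {Ω : Type*} [MeasureSpace Ω] (μ : Measure Ω) [IsProbabilityMeasure μ]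
    (X : Ω → ℝ) (hX : ∀ᵐ ω ∂μ, 0 < X ω)
    (α F : ℝ) (hα0 : 0 < α) (hα1 : α < 1) (hF : 0 < F)
    (hmom : ∀ l : ℝ, l < α →
      ∫ ω, X ω ^ l ∂μ = F ^ (l / α) * (Real.Gamma (1 - l / α) / Real.Gamma (1 - l))) :
    ∫ ω, ((1 - α) * X ω ^ (-(α / (1 - α))) - F ^ (-(1 / (1 - α))))^3 ∂μ
      = F ^ (-(3 / (1 - α))) * (17 - 21 * (1 - α) + 6 * (1 - α)^2) := by
  have hc : F ^ (-(3 / (1 - α))) = (F ^ (-(1 / (1 - α)))) ^ 3 := by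
    rw [← rpow_natCast, ← rpow_mul hF.le]
    ring_nf
  rw [integral_sub_const_pow fun k _ ↦ integrable_mul_rpow_neg_pow hX hα0 hα1 hF hmom k]
  simp only [sum_range_succ, sum_range_zero, prod_range_succ, prod_range_zero,
    integral_mul_rpow_neg_pow hX hα0 hα1 hF hmom, hc]
  norm_num
  ring
end
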